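/- arXiv:2601.22496 — 2 statements merged into one kernel-verified Lean document; each statement's English description precedes it below -/
import Mathlib

section
/- Characterization of value sufficiency (finite case): let V = v(S,G) and Z = φ(S,G). The representation Z is value-sufficient, i.e. I(V;G|S,Z) = 0, if and only if there exists a function ṽ : 𝒮 × 𝒵 → 𝒱 such that v(s,g) = ṽ(s, φ(s,g)) for every (s,g) with p(s,g) > 0. -/
open scoped Classical
open Finset

/-- Joint probability `P(f = x)` of a discrete random variable `f` on the sample space
`𝒮 × 𝒢 × 𝒜` equipped with the pmf `p`. -/
noncomputable def Pr {𝒮 𝒢 𝒜 : Type*} [Fintype 𝒮] [Fintype 𝒢] [Fintype 𝒜] {X : Type*}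
    (p : 𝒮 × 𝒢 × 𝒜 → ℝ) (f : 𝒮 × 𝒢 × 𝒜 → X) (x : X) : ℝ :=
  ∑ ω : 𝒮 × 𝒢 × 𝒜, if f ω = x then p ω else 0

/-- Conditional mutual information `I(X;Y|W)` of discrete random variables that are
deterministic functions of a sample drawn from the pmf `p` on `𝒮 × 𝒢 × 𝒜`. -/
noncomputable def CMI {𝒮 𝒢 𝒜 : Type*} [Fintype 𝒮] [Fintype 𝒢] [Fintype 𝒜]
    {X Y W : Type*} [Fintype X] [Fintype Y] [Fintype W]
    (p : 𝒮 × 𝒢 × 𝒜 → ℝ) (fX : 𝒮 × 𝒢 × 𝒜 → X) (fY : 𝒮 × 𝒢 × 𝒜 → Y)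
    (fW : 𝒮 × 𝒢 × 𝒜 → W) : ℝ :=
  ∑ x : X, ∑ y : Y, ∑ w : W,
    if 0 < Pr p (fun ω => (fX ω, fY ω, fW ω)) (x, y, w) then
      Pr p (fun ω => (fX ω, fY ω, fW ω)) (x, y, w) *
        Real.log ((Pr p (fun ω => (fX ω, fY ω, fW ω)) (x, y, w) * Pr p fW w) /
          (Pr p (fun ω => (fX ω, fW ω)) (x, w) * Pr p (fun ω => (fY ω, fW ω)) (y, w)))
    else 0

/-- Marginal `p(s,g) := ∑ₐ p(s,g,a)`. -/
noncomputable def pSG {𝒮 𝒢 𝒜 : Type*} [Fintype 𝒜] (p : 𝒮 × 𝒢 × 𝒜 → ℝ) (s : 𝒮) (g : 𝒢) : ℝ :=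
  ∑ a : 𝒜, p (s, g, a)

/-- Conditional `p(a|s,g) := p(s,g,a) / p(s,g)`. -/
noncomputable def pA {𝒮 𝒢 𝒜 : Type*} [Fintype 𝒜] (p : 𝒮 × 𝒢 × 𝒜 → ℝ) (s : 𝒮) (g : 𝒢)
    (a : 𝒜) : ℝ :=
  p (s, g, a) / pSG p s g

/-!
Put `Q(x,y,w) = P(x,w) P(y,w) / P(w)`; summing over `x` and `y` shows that `Q` has the same
total mass as `P`. On the support of `P` each term of the conditional mutual information is
`P log (P / Q) = Q klFun (P / Q) + (P - Q)`, so `I(X;Y|W)` is a sum of nonnegative terms plus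
`mass P - Q(supp P) ≥ 0`, and it vanishes exactly when `P = Q` on the support of `P`, i.e. when
`X` and `Y` are conditionally independent given `W`.

For `X = V`, `Y = G`, `W = (S, Z)`: if `v` factors through `(s, φ(s,g))`, then `V` is a function
of `W` on the support, which gives conditional independence. Conversely `(G, W)` determines `V`,
so `P(v,g,w) = P(g,w)` and independence forces `P(v,w) = P(w)`: on `{W = w}` the value `V` is
almost surely constant, hence equal for any two supported `g, g'` with the same `(s, φ(s,g))`.
-/

open Real InformationTheory

lemma mul_log_div_eq_mul_klFun_add {a q : ℝ} (hq : 0 < q) :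
    a * log (a / q) = q * klFun (a / q) + (a - q) := by
  rw [klFun_apply]
  field_simp
  ring

lemma sum_mul_log_div_eq_zero_iff {ι : Type*} [Fintype ι] {a q : ι → ℝ}
    (ha : ∀ i, 0 ≤ a i) (hq : ∀ i, 0 ≤ q i) (hsupp : ∀ i, 0 < a i → 0 < q i)
    (hsum : ∑ i, q i ≤ ∑ i, a i) :
    ∑ i with 0 < a i, a i * log (a i / q i) = 0 ↔ ∀ i, 0 < a i → a i = q i := by
  constructor
  · intro h0
    have hmass : ∑ i with 0 < a i, a i = ∑ i, a i :=
      sum_filter_of_ne fun i _ hi => (ha i).lt_of_ne' hi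
    have hq_le : ∑ i with 0 < a i, q i ≤ ∑ i, q i :=
      sum_le_univ_sum_of_nonneg hq
    have hkl_nonneg : ∀ i ∈ univ.filter (0 < a ·), 0 ≤ q i * klFun (a i / q i) := fun i hi =>
      mul_nonneg (hq i) (klFun_nonneg (div_nonneg (ha i) (hq i)))
    have hsplit : ∑ i with 0 < a i, a i * log (a i / q i) =
        ∑ i with 0 < a i, q i * klFun (a i / q i) +
          (∑ i with 0 < a i, a i - ∑ i with 0 < a i, q i) := by
      rw [← sum_sub_distrib, ← sum_add_distrib]
      exact sum_congr rfl fun i hi => mul_log_div_eq_mul_klFun_add (hsupp i (mem_filter.1 hi).2)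
    have hkl_zero : ∑ i with 0 < a i, q i * klFun (a i / q i) = 0 := by
      linarith [sum_nonneg hkl_nonneg]
    intro i hi
    have hqi := hsupp i hi
    have := (sum_eq_zero_iff_of_nonneg hkl_nonneg).1 hkl_zero i (mem_filter.2 ⟨mem_univ i, hi⟩)
    rw [mul_eq_zero, or_iff_right hqi.ne', klFun_eq_zero_iff (div_nonneg (ha i) hqi.le),
      div_eq_one_iff_eq hqi.ne'] at this
    exact this
  · intro h
    refine sum_eq_zero fun i hi => ?_
    rw [← h i (mem_filter.1 hi).2, div_self (mem_filter.1 hi).2.ne', log_one, mul_zero]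

lemma exists_eq_comp_on {α β γ : Type*} [Nonempty γ] {s : Set α} {f : α → γ} {g : α → β}
    (h : ∀ a ∈ s, ∀ b ∈ s, g a = g b → f a = f b) : ∃ F : β → γ, ∀ a ∈ s, f a = F (g a) := by
  have hfactors : (fun a : s => f a).FactorsThrough (fun a : s => g a) :=
    fun a b hab => h a a.2 b b.2 hab
  exact ⟨Function.extend (fun a : s => g a) (fun a : s => f a) fun _ => Classical.arbitrary γ,
    fun a ha => (hfactors.extend_apply _ ⟨a, ha⟩).symm⟩

section Pr

variable {𝒮 𝒢 𝒜 : Type*} [Fintype 𝒮] [Fintype 𝒢] [Fintype 𝒜] {p : 𝒮 × 𝒢 × 𝒜 → ℝ}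
  {X Y : Type*}

lemma Pr_eq_sum_filter (f : 𝒮 × 𝒢 × 𝒜 → X) (x : X) : Pr p f x = ∑ ω with f ω = x, p ω :=
  (sum_filter _ _).symm

lemma Pr_nonneg (hp : ∀ ω, 0 ≤ p ω) (f : 𝒮 × 𝒢 × 𝒜 → X) (x : X) : 0 ≤ Pr p f x :=
  sum_nonneg fun ω _ => by split_ifs <;> simp [hp ω]

lemma le_Pr (hp : ∀ ω, 0 ≤ p ω) {f : 𝒮 × 𝒢 × 𝒜 → X} {ω : 𝒮 × 𝒢 × 𝒜} {x : X} (h : f ω = x) :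
    p ω ≤ Pr p f x := by
  rw [Pr_eq_sum_filter]
  exact single_le_sum (fun ω _ => hp ω) (mem_filter.2 ⟨mem_univ ω, h⟩)

lemma Pr_mono (hp : ∀ ω, 0 ≤ p ω) {f : 𝒮 × 𝒢 × 𝒜 → X} {g : 𝒮 × 𝒢 × 𝒜 → Y} {x : X} {y : Y}
    (h : ∀ ω, f ω = x → g ω = y) : Pr p f x ≤ Pr p g y := by
  rw [Pr_eq_sum_filter, Pr_eq_sum_filter]
  exact sum_le_sum_of_subset_of_nonneg (fun ω hω => by simp_all) fun ω _ _ => hp ω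

lemma Pr_add_le (hp : ∀ ω, 0 ≤ p ω) {f : 𝒮 × 𝒢 × 𝒜 → X} {g : 𝒮 × 𝒢 × 𝒜 → Y} {x : X} {y : Y}
    (h : ∀ ω, f ω = x → g ω = y) {ω : 𝒮 × 𝒢 × 𝒜} (hfω : f ω ≠ x) (hgω : g ω = y) :
    Pr p f x + p ω ≤ Pr p g y := by
  rw [Pr_eq_sum_filter, Pr_eq_sum_filter, add_comm, ← sum_insert (by simp [hfω])]
  refine sum_le_sum_of_subset_of_nonneg (fun ω' hω' => ?_) fun ω _ _ => hp ω
  rcases mem_insert.1 hω' with rfl | hω' <;> simp_all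

lemma Pr_congr {f : 𝒮 × 𝒢 × 𝒜 → X} {g : 𝒮 × 𝒢 × 𝒜 → Y} {x : X} {y : Y}
    (h : ∀ ω, p ω ≠ 0 → (f ω = x ↔ g ω = y)) : Pr p f x = Pr p g y :=
  sum_congr rfl fun ω _ => by
    by_cases hω : p ω = 0
    · simp [hω]
    · exact if_congr (h ω hω) rfl rfl

lemma exists_ne_zero_of_Pr_ne_zero {f : 𝒮 × 𝒢 × 𝒜 → X} {x : X} (h : Pr p f x ≠ 0) :
    ∃ ω, f ω = x ∧ p ω ≠ 0 := by
  rw [Pr_eq_sum_filter] at h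
  obtain ⟨ω, hω, hpω⟩ := exists_ne_zero_of_sum_ne_zero h
  exact ⟨ω, (mem_filter.1 hω).2, hpω⟩

lemma sum_Pr [Fintype X] (f : 𝒮 × 𝒢 × 𝒜 → X) : ∑ x, Pr p f x = ∑ ω, p ω := by
  simp only [Pr]
  rw [sum_comm]
  simp

lemma sum_Pr_prod_fst [Fintype X] (f : 𝒮 × 𝒢 × 𝒜 → X) (g : 𝒮 × 𝒢 × 𝒜 → Y) (y : Y) :
    ∑ x, Pr p (fun ω => (f ω, g ω)) (x, y) = Pr p g y := by
  simp only [Pr]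
  rw [sum_comm]
  simp [Prod.ext_iff, ite_and]

end Pr

section CondIndep

variable {𝒮 𝒢 𝒜 : Type*} [Fintype 𝒮] [Fintype 𝒢] [Fintype 𝒜] {p : 𝒮 × 𝒢 × 𝒜 → ℝ}
  {X Y W : Type*}

def CondIndep (p : 𝒮 × 𝒢 × 𝒜 → ℝ) (fX : 𝒮 × 𝒢 × 𝒜 → X) (fY : 𝒮 × 𝒢 × 𝒜 → Y)
    (fW : 𝒮 × 𝒢 × 𝒜 → W) : Prop :=
  ∀ x y w, 0 < Pr p (fun ω => (fX ω, fY ω, fW ω)) (x, y, w) →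
    Pr p (fun ω => (fX ω, fY ω, fW ω)) (x, y, w) * Pr p fW w =
      Pr p (fun ω => (fX ω, fW ω)) (x, w) * Pr p (fun ω => (fY ω, fW ω)) (y, w)

variable {fX : 𝒮 × 𝒢 × 𝒜 → X} {fY : 𝒮 × 𝒢 × 𝒜 → Y} {fW : 𝒮 × 𝒢 × 𝒜 → W}

lemma CMI_eq_zero_iff [Fintype X] [Fintype Y] [Fintype W] (hp : ∀ ω, 0 ≤ p ω) :
    CMI p fX fY fW = 0 ↔ CondIndep p fX fY fW := by
  set P := Pr p (fun ω => (fX ω, fY ω, fW ω))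
  set Q : X × Y × W → ℝ := fun t => Pr p (fun ω => (fX ω, fW ω)) (t.1, t.2.2) *
    Pr p (fun ω => (fY ω, fW ω)) (t.2.1, t.2.2) / Pr p fW t.2.2
  have hCMI : CMI p fX fY fW = ∑ t with 0 < P t, P t * log (P t / Q t) := by
    simp only [CMI, sum_filter, Fintype.sum_prod_type, Q, div_div_eq_mul_div]
    rfl
  have hmarg_pos : ∀ x y w, 0 < P (x, y, w) → 0 < Pr p (fun ω => (fX ω, fW ω)) (x, w) ∧
      0 < Pr p (fun ω => (fY ω, fW ω)) (y, w) ∧ 0 < Pr p fW w := fun x y w hP =>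
    ⟨hP.trans_le (Pr_mono hp fun ω h => by simp_all),
      hP.trans_le (Pr_mono hp fun ω h => by simp_all),
      hP.trans_le (Pr_mono hp fun ω h => by simp_all)⟩
  have hQ_pos : ∀ t, 0 < P t → 0 < Q t := fun ⟨x, y, w⟩ hP =>
    have ⟨hxw, hyw, hw⟩ := hmarg_pos x y w hP
    div_pos (mul_pos hxw hyw) hw
  have hQ_sum : ∑ t, Q t = ∑ t, P t := by
    calc ∑ t, Q t
        = ∑ w, (∑ x, Pr p (fun ω => (fX ω, fW ω)) (x, w)) *
            (∑ y, Pr p (fun ω => (fY ω, fW ω)) (y, w)) / Pr p fW w := by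
          simp only [Q, Fintype.sum_prod_type, sum_mul, mul_sum, sum_div]
          conv_lhs => enter [2, x]; rw [sum_comm]
          rw [sum_comm]
          exact sum_congr rfl fun w _ => sum_comm
      _ = ∑ w, Pr p fW w := by simp only [sum_Pr_prod_fst, mul_self_div_self]
      _ = ∑ t, P t := by rw [sum_Pr fW, sum_Pr]
  rw [hCMI, sum_mul_log_div_eq_zero_iff (Pr_nonneg hp _) (fun t => ?_) hQ_pos hQ_sum.le]
  · simp only [CondIndep, Prod.forall]
    refine forall₃_congr fun x y w => forall_congr' fun hP => ?_
    exact eq_div_iff (hmarg_pos x y w hP).2.2.ne'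
  · exact div_nonneg (mul_nonneg (Pr_nonneg hp _ _) (Pr_nonneg hp _ _)) (Pr_nonneg hp _ _)

lemma condIndep_of_eq_comp (F : W → X) (h : ∀ ω, p ω ≠ 0 → fX ω = F (fW ω)) :
    CondIndep p fX fY fW := by
  intro x y w hP
  obtain ⟨ω, hω, hpω⟩ := exists_ne_zero_of_Pr_ne_zero hP.ne'
  simp only [Prod.mk.injEq] at hω
  obtain ⟨rfl, -, rfl⟩ := hω
  have hXYW : Pr p (fun ω => (fX ω, fY ω, fW ω)) (fX ω, y, fW ω) =
      Pr p (fun ω => (fY ω, fW ω)) (y, fW ω) :=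
    Pr_congr fun ω' hω' => by
      simp only [Prod.mk.injEq, h ω' hω', h ω hpω]
      exact ⟨fun h => h.2, fun h => ⟨by rw [h.2], h⟩⟩
  have hXW : Pr p (fun ω => (fX ω, fW ω)) (fX ω, fW ω) = Pr p fW (fW ω) :=
    Pr_congr fun ω' hω' => by
      simp only [Prod.mk.injEq, h ω' hω', h ω hpω]
      exact ⟨fun h => h.2, fun h => ⟨by rw [h], h⟩⟩
  rw [hXYW, hXW, mul_comm]

lemma CondIndep.fX_eq_of_fW_eq (hp : ∀ ω, 0 ≤ p ω) (hCI : CondIndep p fX fY fW)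
    (hdet : ∀ ω ω', p ω ≠ 0 → p ω' ≠ 0 → fY ω = fY ω' → fW ω = fW ω' → fX ω = fX ω')
    {ω ω' : 𝒮 × 𝒢 × 𝒜} (hω : p ω ≠ 0) (hω' : p ω' ≠ 0) (hW : fW ω = fW ω') :
    fX ω = fX ω' := by
  have hXYW : Pr p (fun ω => (fX ω, fY ω, fW ω)) (fX ω, fY ω, fW ω) =
      Pr p (fun ω => (fY ω, fW ω)) (fY ω, fW ω) :=
    Pr_congr fun ω'' hω'' => by
      simp only [Prod.mk.injEq]
      exact ⟨fun h => h.2, fun h => ⟨hdet ω'' ω hω'' hω h.1 h.2, h⟩⟩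
  have hYW_pos : 0 < Pr p (fun ω => (fY ω, fW ω)) (fY ω, fW ω) :=
    ((hp ω).lt_of_ne' hω).trans_le (le_Pr hp rfl)
  have hXW : Pr p (fun ω => (fX ω, fW ω)) (fX ω, fW ω) = Pr p fW (fW ω) := by
    have := hCI _ _ _ (hXYW ▸ hYW_pos)
    rw [hXYW, mul_comm (Pr p (fun ω => (fX ω, fW ω)) _)] at this
    exact (mul_left_cancel₀ hYW_pos.ne' this).symm
  by_contra hne
  have := Pr_add_le hp (f := fun ω => (fX ω, fW ω)) (x := (fX ω, fW ω))
    (fun _ h => congrArg Prod.snd h) (ω := ω') (by simp [Ne.symm hne]) hW.symm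
  linarith [(hp ω').lt_of_ne' hω']

end CondIndep

lemma pSG_pos_of_ne_zero {𝒮 𝒢 𝒜 : Type*} [Fintype 𝒜] {p : 𝒮 × 𝒢 × 𝒜 → ℝ}
    (hp : ∀ ω, 0 ≤ p ω) {ω : 𝒮 × 𝒢 × 𝒜} (hω : p ω ≠ 0) : 0 < pSG p ω.1 ω.2.1 :=
  ((hp ω).lt_of_ne' hω).trans_le (single_le_sum (fun a _ => hp (ω.1, ω.2.1, a)) (mem_univ ω.2.2))

theorem value_sufficiency_iff_factorization_general {𝒮 𝒢 𝒜 𝒵 𝒱 : Type*}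
    [Fintype 𝒮] [Fintype 𝒢] [Fintype 𝒜] [Fintype 𝒵] [Fintype 𝒱]
    [Nonempty 𝒱]
    (p : 𝒮 × 𝒢 × 𝒜 → ℝ) (hp0 : ∀ ω, 0 ≤ p ω)
    (φ : 𝒮 × 𝒢 → 𝒵) (v : 𝒮 × 𝒢 → 𝒱) :
    CMI p (fun ω => v (ω.1, ω.2.1)) (fun ω => ω.2.1)
        (fun ω => (ω.1, φ (ω.1, ω.2.1))) = 0 ↔
      ∃ vTilde : 𝒮 × 𝒵 → 𝒱, ∀ s g, 0 < pSG p s g → v (s, g) = vTilde (s, φ (s, g)) := by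
  rw [CMI_eq_zero_iff hp0]
  constructor
  · intro hCI
    set S : Set (𝒮 × 𝒢) := {sg | 0 < pSG p sg.1 sg.2}
    have hfactors : ∀ sg ∈ S, ∀ sg' ∈ S, (sg.1, φ sg) = (sg'.1, φ sg') → v sg = v sg' := by
      rintro ⟨s, g⟩ hg ⟨s', g'⟩ hg' hW
      obtain ⟨a, -, ha⟩ := exists_ne_zero_of_sum_ne_zero (show pSG p s g ≠ 0 from hg.ne')
      obtain ⟨a', -, ha'⟩ := exists_ne_zero_of_sum_ne_zero (show pSG p s' g' ≠ 0 from hg'.ne')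
      refine hCI.fX_eq_of_fW_eq hp0 (fun ω ω' _ _ hY hW => ?_)
        (ω := (s, g, a)) (ω' := (s', g', a')) ha ha' hW
      rw [(Prod.mk.inj hW).1, hY]
    obtain ⟨vTilde, hvTilde⟩ := exists_eq_comp_on hfactors
    exact ⟨vTilde, fun s g hg => hvTilde (s, g) hg⟩
  · rintro ⟨vTilde, hvTilde⟩
    exact condIndep_of_eq_comp vTilde fun ω hω => hvTilde _ _ (pSG_pos_of_ne_zero hp0 hω)

/-- **Characterization of value sufficiency, finite case.** With
`V = v(S,G)` and `Z = φ(S,G)`, the representation is value-sufficient,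
i.e. `I(V;G|S,Z) = 0`, iff `v` factors through `(s, φ(s,g))` on the support of `p`. -/
theorem value_sufficiency_iff_factorization {𝒮 𝒢 𝒜 𝒵 𝒱 : Type*}
    [Fintype 𝒮] [Fintype 𝒢] [Fintype 𝒜] [Fintype 𝒵] [Fintype 𝒱]
    [Nonempty 𝒮] [Nonempty 𝒢] [Nonempty 𝒜] [Nonempty 𝒵] [Nonempty 𝒱]
    (p : 𝒮 × 𝒢 × 𝒜 → ℝ) (hp0 : ∀ ω, 0 ≤ p ω) (hp1 : ∑ ω : 𝒮 × 𝒢 × 𝒜, p ω = 1)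
    (φ : 𝒮 × 𝒢 → 𝒵) (v : 𝒮 × 𝒢 → 𝒱) :
    CMI p (fun ω => v (ω.1, ω.2.1)) (fun ω => ω.2.1)
        (fun ω => (ω.1, φ (ω.1, ω.2.1))) = 0 ↔
      ∃ vTilde : 𝒮 × 𝒵 → 𝒱, ∀ s g, 0 < pSG p s g → v (s, g) = vTilde (s, φ (s, g)) :=
  value_sufficiency_iff_factorization_general p hp0 φ v
end

section
/- Positive conditional action variance lower-bounds the information gap: with V = v(S,G) and a family of action sets B : 𝒮 × 𝒱 → Set 𝒜, define q(s,v,g) := P(A ∈ B(s,v) ∣ S = s, V = v, G = g) and q̄(s,v) := P(A ∈ B(s,v) ∣ S = s, V = v) (for triples/pairs of positive probability). Then I(A;G|S,V) ≥ 2 · ∑_{(s,v,g) : P(S=s,V=v,G=g) > 0} P(S=s, V=v, G=g) · ( q(s,v,g) − q̄(s,v) )². In particular, if this expected conditional variance is strictly positive, then I(A;G|S,V) > 0. -/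
/-!
Fix `s` and `v`. For each `g` with `v(s,g) = v`, the `(s,v,g)`-part of `I(A;G|S,V)` is
`P(s,g)` times the relative entropy of `p(· | s,g)` with respect to `p(· | s,v)`. Coarsening `A`
to the indicator of `B(s,v)` can only lower a relative entropy (log-sum inequality), which leaves
the binary divergence `kl(q ‖ q̄)`, and Pinsker's inequality `kl(q ‖ q̄) ≥ 2 (q - q̄)²` bounds that
from below. Summing over `(s,v,g)` gives the claim.
-/

open scoped Classical
open Finset

/-- Conditional probability `q(s,v,g) := P(A ∈ B(s,v) | S = s, V = v, G = g)`. -/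
noncomputable def qSVG {𝒮 𝒢 𝒜 𝒱 : Type*} [Fintype 𝒮] [Fintype 𝒢] [Fintype 𝒜]
    (p : 𝒮 × 𝒢 × 𝒜 → ℝ) (v : 𝒮 × 𝒢 → 𝒱) (B : 𝒮 × 𝒱 → Set 𝒜)
    (s : 𝒮) (vv : 𝒱) (g : 𝒢) : ℝ :=
  (∑ ω : 𝒮 × 𝒢 × 𝒜,
      if ω.1 = s ∧ v (ω.1, ω.2.1) = vv ∧ ω.2.1 = g ∧ ω.2.2 ∈ B (s, vv) then p ω else 0) /
    (∑ ω : 𝒮 × 𝒢 × 𝒜, if ω.1 = s ∧ v (ω.1, ω.2.1) = vv ∧ ω.2.1 = g then p ω else 0)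

/-- Conditional probability `q̄(s,v) := P(A ∈ B(s,v) | S = s, V = v)`. -/
noncomputable def qSV {𝒮 𝒢 𝒜 𝒱 : Type*} [Fintype 𝒮] [Fintype 𝒢] [Fintype 𝒜]
    (p : 𝒮 × 𝒢 × 𝒜 → ℝ) (v : 𝒮 × 𝒢 → 𝒱) (B : 𝒮 × 𝒱 → Set 𝒜)
    (s : 𝒮) (vv : 𝒱) : ℝ :=
  (∑ ω : 𝒮 × 𝒢 × 𝒜,
      if ω.1 = s ∧ v (ω.1, ω.2.1) = vv ∧ ω.2.2 ∈ B (s, vv) then p ω else 0) /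
    (∑ ω : 𝒮 × 𝒢 × 𝒜, if ω.1 = s ∧ v (ω.1, ω.2.1) = vv then p ω else 0)

open Real Set

/-- The binary relative entropy `kl(x ‖ y)`. Since `log 0 = 0`, the infinite values at `y = 0 < x`
and `x < 1 = y` become junk; hence the hypotheses `y = 0 → x = 0` and `y = 1 → x = 1` below. -/
noncomputable def binaryKL (x y : ℝ) : ℝ := x * log (x / y) + (1 - x) * log ((1 - x) / (1 - y))

lemma hasDerivAt_mul_log_div (a : ℝ) {t : ℝ} (ht : 0 < t) :
    HasDerivAt (fun u => a * log (a / u)) (-a / t) t := by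
  rcases eq_or_ne a 0 with rfl | ha
  · simpa using hasDerivAt_const t (0 : ℝ)
  · refine ((((hasDerivAt_const t a).div (hasDerivAt_id t) ht.ne').log
      (div_ne_zero ha ht.ne')).const_mul a).congr_deriv ?_
    simp only [id, Pi.div_apply]
    field_simp
    ring

lemma hasDerivAt_binaryKL (x : ℝ) {t : ℝ} (ht0 : 0 < t) (ht1 : t < 1) :
    HasDerivAt (binaryKL x) (-x / t + (1 - x) / (1 - t)) t := by
  have h := (hasDerivAt_mul_log_div (1 - x) (sub_pos.2 ht1)).comp t ((hasDerivAt_id t).const_sub 1)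
  exact ((hasDerivAt_mul_log_div x ht0).add h).congr_deriv (by ring)

lemma continuousOn_binaryKL {x a b : ℝ} (ha : x ≠ 0 → 0 < a) (hb : x ≠ 1 → b < 1) :
    ContinuousOn (binaryKL x) (Icc a b) := by
  refine ContinuousOn.add ?_ ?_
  · rcases eq_or_ne x 0 with rfl | hx
    · simpa using continuousOn_const
    have ht : ∀ t ∈ Icc a b, t ≠ 0 := fun t ht => ((ha hx).trans_le ht.1).ne'
    exact continuousOn_const.mul
      ((continuousOn_const.div continuousOn_id ht).log fun t h => div_ne_zero hx (ht t h))
  · rcases eq_or_ne x 1 with rfl | hx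
    · simpa using continuousOn_const
    have ht : ∀ t ∈ Icc a b, 1 - t ≠ 0 := fun t ht => (sub_pos.2 (ht.2.trans_lt (hb hx))).ne'
    exact continuousOn_const.mul ((continuousOn_const.div (continuousOn_const.sub continuousOn_id)
      ht).log fun t h => div_ne_zero (sub_ne_zero.2 (Ne.symm hx)) (ht t h))

@[simp]
lemma binaryKL_self (x : ℝ) : binaryKL x x = 0 := by
  rcases eq_or_ne x 0 with rfl | h0
  · simp [binaryKL]
  rcases eq_or_ne x 1 with rfl | h1
  · simp [binaryKL]
  simp [binaryKL, h0, sub_ne_zero.2 (Ne.symm h1)]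

/-- The derivative has the sign of `t - x`, so the function is minimal at `t = x`. -/
lemma hasDerivAt_binaryKL_sub_two_mul_sq (x : ℝ) {t : ℝ} (ht0 : 0 < t) (ht1 : t < 1) :
    HasDerivAt (fun u => binaryKL x u - 2 * (x - u) ^ 2)
      ((t - x) * ((1 - 2 * t) ^ 2 / (t * (1 - t)))) t := by
  have h := (hasDerivAt_binaryKL x ht0 ht1).sub
    (((hasDerivAt_id t).const_sub x).pow 2 |>.const_mul 2)
  refine h.congr_deriv ?_
  have : 1 - t ≠ 0 := (sub_pos.2 ht1).ne'
  simp only [id]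
  field_simp
  ring

theorem two_mul_sq_sub_le_binaryKL_of_pos_of_lt_one {x y : ℝ} (hx0 : 0 ≤ x) (hx1 : x ≤ 1)
    (hy0 : 0 < y) (hy1 : y < 1) : 2 * (x - y) ^ 2 ≤ binaryKL x y := by
  set G : ℝ → ℝ := fun t => binaryKL x t - 2 * (x - t) ^ 2
  set G' : ℝ → ℝ := fun t => (t - x) * ((1 - 2 * t) ^ 2 / (t * (1 - t)))
  have hG : ∀ t ∈ Ioo (0 : ℝ) 1, HasDerivAt G (G' t) t := fun t ht =>
    hasDerivAt_binaryKL_sub_two_mul_sq x ht.1 ht.2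
  have hGx : G x = 0 := by simp [G]
  suffices G x ≤ G y by simp only [G] at this; linarith
  have hdiv : ∀ t ∈ Ioo (0 : ℝ) 1, 0 ≤ (1 - 2 * t) ^ 2 / (t * (1 - t)) := fun t ht =>
    div_nonneg (sq_nonneg _) (mul_pos ht.1 (sub_pos.2 ht.2)).le
  have hGc : ∀ {a b : ℝ}, (x ≠ 0 → 0 < a) → (x ≠ 1 → b < 1) → ContinuousOn G (Icc a b) :=
    fun ha hb => (continuousOn_binaryKL ha hb).sub (by fun_prop)
  rcases le_total x y with hxy | hyx
  · refine monotoneOn_of_hasDerivWithinAt_nonneg (f' := G') (convex_Icc x y)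
      (hGc (fun h => lt_of_le_of_ne hx0 (Ne.symm h)) fun _ => hy1) (fun t ht => ?_)
      (fun t ht => ?_) ⟨le_rfl, hxy⟩ ⟨hxy, le_rfl⟩ hxy <;> rw [interior_Icc] at ht
    · exact (hG t ⟨hx0.trans_lt ht.1, ht.2.trans hy1⟩).hasDerivWithinAt
    · exact mul_nonneg (sub_nonneg.2 ht.1.le) (hdiv t ⟨hx0.trans_lt ht.1, ht.2.trans hy1⟩)
  · refine antitoneOn_of_hasDerivWithinAt_nonpos (f' := G') (convex_Icc y x)
      (hGc (fun _ => hy0) fun h => lt_of_le_of_ne hx1 h) (fun t ht => ?_) (fun t ht => ?_)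
      ⟨le_rfl, hyx⟩ ⟨hyx, le_rfl⟩ hyx <;> rw [interior_Icc] at ht
    · exact (hG t ⟨hy0.trans ht.1, ht.2.trans_le hx1⟩).hasDerivWithinAt
    · exact mul_nonpos_of_nonpos_of_nonneg (sub_nonpos.2 ht.2.le)
        (hdiv t ⟨hy0.trans ht.1, ht.2.trans_le hx1⟩)

/-- Pinsker's inequality for Bernoulli distributions. -/
theorem two_mul_sq_sub_le_binaryKL {x y : ℝ} (hx0 : 0 ≤ x) (hx1 : x ≤ 1) (hy0 : 0 ≤ y)
    (hy1 : y ≤ 1) (h0 : y = 0 → x = 0) (h1 : y = 1 → x = 1) :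
    2 * (x - y) ^ 2 ≤ binaryKL x y := by
  rcases hy0.eq_or_lt with rfl | hy0
  · simp [binaryKL, h0 rfl]
  rcases hy1.eq_or_lt with rfl | hy1
  · simp [binaryKL, h1 rfl]
  exact two_mul_sq_sub_le_binaryKL_of_pos_of_lt_one hx0 hx1 hy0 hy1

/-- The tangent-line bound `log u ≥ 1 - u⁻¹` at `u = c / (d * r)`. -/
lemma mul_log_add_sub_le_mul_log_div {c d r : ℝ} (hc : 0 ≤ c) (hd : 0 ≤ d)
    (hcd : d = 0 → c = 0) (hr : 0 < r) : c * log r + c - d * r ≤ c * log (c / d) := by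
  rcases hc.eq_or_lt with rfl | hc
  · simpa using mul_nonneg hd hr.le
  have hd : 0 < d := hd.lt_of_ne fun h => hc.ne' (hcd h.symm)
  have h := one_sub_inv_le_log_of_pos (div_pos hc (mul_pos hd hr))
  rw [log_div hc.ne' (mul_pos hd hr).ne', log_mul hd.ne' hr.ne', inv_div] at h
  rw [log_div hc.ne' hd.ne']
  have : c * (d * r / c) = d * r := by field_simp
  nlinarith

lemma sum_eq_zero_of_sum_eq_zero_of_absCont {ι : Type*} {t : Finset ι} {c d : ι → ℝ}
    (hd : ∀ i ∈ t, 0 ≤ d i) (hcd : ∀ i ∈ t, d i = 0 → c i = 0) (h : ∑ i ∈ t, d i = 0) :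
    ∑ i ∈ t, c i = 0 :=
  Finset.sum_eq_zero fun i hi => hcd i hi ((Finset.sum_eq_zero_iff_of_nonneg hd).1 h i hi)

/-- The log-sum inequality. -/
theorem sum_mul_log_div_sum_le {ι : Type*} (t : Finset ι) {c d : ι → ℝ}
    (hc : ∀ i ∈ t, 0 ≤ c i) (hd : ∀ i ∈ t, 0 ≤ d i) (hcd : ∀ i ∈ t, d i = 0 → c i = 0) :
    (∑ i ∈ t, c i) * log ((∑ i ∈ t, c i) / ∑ i ∈ t, d i) ≤ ∑ i ∈ t, c i * log (c i / d i) := by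
  rcases (sum_nonneg hc).eq_or_lt with hC | hC
  · rw [← hC, zero_mul]
    exact sum_nonneg fun i hi => by simp [(sum_eq_zero_iff_of_nonneg hc).1 hC.symm i hi]
  have hD : 0 < ∑ i ∈ t, d i := (sum_nonneg hd).lt_of_ne fun h =>
    hC.ne' (sum_eq_zero_of_sum_eq_zero_of_absCont hd hcd h.symm)
  set C := ∑ i ∈ t, c i
  set D := ∑ i ∈ t, d i
  calc C * log (C / D) = ∑ i ∈ t, (c i * log (C / D) + c i - d i * (C / D)) := by
        rw [sum_sub_distrib, sum_add_distrib, ← sum_mul, ← sum_mul]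
        field_simp
        ring
    _ ≤ ∑ i ∈ t, c i * log (c i / d i) := sum_le_sum fun i hi =>
        mul_log_add_sub_le_mul_log_div (hc i hi) (hd i hi) (hcd i hi) (div_pos hC hD)

/-- Pinsker's inequality, tested on the single event `t`. -/
theorem two_mul_sq_sum_sub_le_sum_mul_log_div {ι : Type*} [Fintype ι] {c d : ι → ℝ}
    (hc : ∀ i, 0 ≤ c i) (hd : ∀ i, 0 ≤ d i) (hc1 : ∑ i, c i = 1) (hd1 : ∑ i, d i = 1)
    (hcd : ∀ i, d i = 0 → c i = 0) (t : Finset ι) :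
    2 * (∑ i ∈ t, c i - ∑ i ∈ t, d i) ^ 2 ≤ ∑ i, c i * log (c i / d i) := by
  have hcc : ∑ i ∈ tᶜ, c i = 1 - ∑ i ∈ t, c i := by rw [← hc1, ← sum_add_sum_compl t]; ring
  have hdc : ∑ i ∈ tᶜ, d i = 1 - ∑ i ∈ t, d i := by rw [← hd1, ← sum_add_sum_compl t]; ring
  have habs : ∀ s : Finset ι, ∑ i ∈ s, d i = 0 → ∑ i ∈ s, c i = 0 := fun s =>
    sum_eq_zero_of_sum_eq_zero_of_absCont (fun i _ => hd i) fun i _ => hcd i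
  calc 2 * (∑ i ∈ t, c i - ∑ i ∈ t, d i) ^ 2
      ≤ binaryKL (∑ i ∈ t, c i) (∑ i ∈ t, d i) :=
        two_mul_sq_sub_le_binaryKL (sum_nonneg fun i _ => hc i)
          (hc1 ▸ sum_le_univ_sum_of_nonneg hc) (sum_nonneg fun i _ => hd i)
          (hd1 ▸ sum_le_univ_sum_of_nonneg hd) (habs t)
          fun h => by linarith [habs tᶜ (by linarith)]
    _ ≤ ∑ i ∈ t, c i * log (c i / d i) + ∑ i ∈ tᶜ, c i * log (c i / d i) := by
        rw [binaryKL, ← hcc, ← hdc]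
        exact add_le_add (sum_mul_log_div_sum_le t (fun i _ => hc i) (fun i _ => hd i)
          fun i _ => hcd i) (sum_mul_log_div_sum_le tᶜ (fun i _ => hc i) (fun i _ => hd i)
          fun i _ => hcd i)
    _ = ∑ i, c i * log (c i / d i) := sum_add_sum_compl t _

lemma ite_pos_mul_eq {x : ℝ} (hx : 0 ≤ x) (y : ℝ) : (if 0 < x then x * y else 0) = x * y := by
  rcases hx.eq_or_lt with rfl | hx <;> simp [*]

lemma le_sum_ite {β : Type*} [Fintype β] {c : β → Prop} [DecidablePred c] {f : β → ℝ}
    (hf : ∀ x, 0 ≤ f x) {b : β} (hb : c b) : f b ≤ ∑ x, if c x then f x else 0 := by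
  simpa [hb] using single_le_sum (f := fun x => if c x then f x else 0)
    (fun x _ => ite_nonneg (hf x) le_rfl) (mem_univ b)

section Coarsening

variable {𝒮 𝒢 𝒜 𝒱 : Type*} [Fintype 𝒜]

lemma pSG_nonneg {p : 𝒮 × 𝒢 × 𝒜 → ℝ} (hp0 : ∀ ω, 0 ≤ p ω) (s : 𝒮) (g : 𝒢) : 0 ≤ pSG p s g :=
  sum_nonneg fun _ _ => hp0 _

lemma sum_pA {p : 𝒮 × 𝒢 × 𝒜 → ℝ} {s : 𝒮} {g : 𝒢} (h : 0 < pSG p s g) :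
    ∑ a, pA p s g a = 1 := by
  simp only [pA, ← sum_div, pSG] at h ⊢
  exact div_self h.ne'

variable [Fintype 𝒢]

noncomputable def pSV (p : 𝒮 × 𝒢 × 𝒜 → ℝ) (v : 𝒮 × 𝒢 → 𝒱) (s : 𝒮) (vv : 𝒱) : ℝ :=
  ∑ g, if v (s, g) = vv then pSG p s g else 0

noncomputable def pSVA (p : 𝒮 × 𝒢 × 𝒜 → ℝ) (v : 𝒮 × 𝒢 → 𝒱) (s : 𝒮) (vv : 𝒱) (a : 𝒜) : ℝ :=
  ∑ g, if v (s, g) = vv then p (s, g, a) else 0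

/-- `p(a | s, v)`: the counterpart of `pA` once `g` is coarsened to `v = v(s,g)`. -/
noncomputable def pAbar (p : 𝒮 × 𝒢 × 𝒜 → ℝ) (v : 𝒮 × 𝒢 → 𝒱) (s : 𝒮) (vv : 𝒱) (a : 𝒜) : ℝ :=
  pSVA p v s vv a / pSV p v s vv

lemma sum_pAbar {p : 𝒮 × 𝒢 × 𝒜 → ℝ} {v : 𝒮 × 𝒢 → 𝒱} {s : 𝒮} {vv : 𝒱}
    (h : 0 < pSV p v s vv) : ∑ a, pAbar p v s vv a = 1 := by
  have : ∑ a, pSVA p v s vv a = pSV p v s vv := by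
    simp only [pSVA, pSV, pSG, ite_sum_zero]
    exact sum_comm
  simp only [pAbar, ← sum_div, this, div_self h.ne']

variable [Fintype 𝒮] (p : 𝒮 × 𝒢 × 𝒜 → ℝ) (v : 𝒮 × 𝒢 → 𝒱)

lemma Pr_eq_sum {X : Type*} (f : 𝒮 × 𝒢 × 𝒜 → X) (x : X) :
    Pr p f x = ∑ s, ∑ g, ∑ a, if f (s, g, a) = x then p (s, g, a) else 0 := by
  simp only [Pr, Fintype.sum_prod_type]

lemma Pr_SVG_eq (s : 𝒮) (vv : 𝒱) (g : 𝒢) :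
    Pr p (fun ω => (ω.1, v (ω.1, ω.2.1), ω.2.1)) (s, vv, g) =
      if v (s, g) = vv then pSG p s g else 0 := by
  by_cases hv : v (s, g) = vv <;> simp [Pr_eq_sum, pSG, and_comm (a := v _ = _), ite_and, hv]

lemma Pr_AGSV_eq (a : 𝒜) (g : 𝒢) (s : 𝒮) (vv : 𝒱) :
    Pr p (fun ω => (ω.2.2, ω.2.1, ω.1, v (ω.1, ω.2.1))) (a, g, s, vv) =
      if v (s, g) = vv then p (s, g, a) else 0 := by
  simp [Pr_eq_sum, ite_and]

lemma Pr_SV_eq (s : 𝒮) (vv : 𝒱) :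
    Pr p (fun ω => (ω.1, v (ω.1, ω.2.1))) (s, vv) = pSV p v s vv := by
  simp [Pr_eq_sum, pSV, pSG, ite_and]

lemma Pr_ASV_eq (a : 𝒜) (s : 𝒮) (vv : 𝒱) :
    Pr p (fun ω => (ω.2.2, ω.1, v (ω.1, ω.2.1))) (a, s, vv) = pSVA p v s vv a := by
  simp [Pr_eq_sum, pSVA, ite_and]

lemma Pr_GSV_eq (g : 𝒢) (s : 𝒮) (vv : 𝒱) :
    Pr p (fun ω => (ω.2.1, ω.1, v (ω.1, ω.2.1))) (g, s, vv) =
      if v (s, g) = vv then pSG p s g else 0 := by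
  simp [Pr_eq_sum, pSG, ite_and]

lemma qSVG_eq_sum_pA (B : 𝒮 × 𝒱 → Set 𝒜) {s : 𝒮} {vv : 𝒱} {g : 𝒢} (hv : v (s, g) = vv) :
    qSVG p v B s vv g = ∑ a ∈ univ.filter (· ∈ B (s, vv)), pA p s g a := by
  simp [qSVG, pA, Fintype.sum_prod_type, and_comm (a := v _ = _), ite_and, hv, ← sum_div,
    sum_filter, pSG]

lemma qSV_eq_sum_pAbar (B : 𝒮 × 𝒱 → Set 𝒜) (s : 𝒮) (vv : 𝒱) :
    qSV p v B s vv = ∑ a ∈ univ.filter (· ∈ B (s, vv)), pAbar p v s vv a := by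
  simp only [pAbar, ← sum_div]
  unfold qSV
  congr 1
  · simp only [ite_and, Fintype.sum_prod_type, sum_ite_irrel, sum_const_zero, sum_ite_eq',
      Finset.mem_univ, ↓reduceIte, pSVA, sum_filter]
    simp only [ite_sum_zero]
    rw [sum_comm]
    exact sum_congr rfl fun _ _ => sum_congr rfl fun _ _ => by split_ifs <;> rfl
  · simp only [ite_and, Fintype.sum_prod_type, sum_ite_irrel, sum_const_zero, sum_ite_eq',
      Finset.mem_univ, ↓reduceIte, pSV, pSG]
    exact sum_congr rfl fun _ _ => by split_ifs <;> simp

variable {p v}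

lemma ite_pos_Pr_SVG_mul (hp0 : ∀ ω, 0 ≤ p ω) (s : 𝒮) (vv : 𝒱) (g : 𝒢) (y : ℝ) :
    (if 0 < Pr p (fun ω => (ω.1, v (ω.1, ω.2.1), ω.2.1)) (s, vv, g) then
      Pr p (fun ω => (ω.1, v (ω.1, ω.2.1), ω.2.1)) (s, vv, g) * y else 0) =
      if v (s, g) = vv then pSG p s g * y else 0 := by
  rw [ite_pos_mul_eq (Pr_SVG_eq p v s vv g ▸ ite_nonneg (pSG_nonneg hp0 s g) le_rfl), Pr_SVG_eq]
  split_ifs <;> simp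

lemma CMI_A_G_SV_eq [Fintype 𝒱] (hp0 : ∀ ω, 0 ≤ p ω) :
    CMI p (fun ω => ω.2.2) (fun ω => ω.2.1) (fun ω => (ω.1, v (ω.1, ω.2.1))) =
      ∑ s, ∑ vv, ∑ g, if v (s, g) = vv then
        ∑ a, p (s, g, a) * log (pA p s g a / pAbar p v s vv a) else 0 := by
  unfold CMI
  rw [sum_comm_cycle]
  simp only [Fintype.sum_prod_type]
  refine sum_congr rfl fun s _ => sum_congr rfl fun vv _ => ?_
  rw [sum_comm]
  refine sum_congr rfl fun g _ => ?_
  rw [ite_sum_zero]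
  refine sum_congr rfl fun a _ => ?_
  simp only [Pr_AGSV_eq, Pr_SV_eq, Pr_ASV_eq, Pr_GSV_eq]
  by_cases hv : v (s, g) = vv
  · simp only [hv, if_true]
    rw [ite_pos_mul_eq (hp0 _), pA, pAbar, div_div_div_eq, mul_comm (pSG p s g)]
  · simp [hv]

lemma two_mul_pSG_mul_sq_sub_le (hp0 : ∀ ω, 0 ≤ p ω) (B : 𝒮 × 𝒱 → Set 𝒜) {s : 𝒮} {vv : 𝒱}
    {g : 𝒢} (hv : v (s, g) = vv) :
    2 * (pSG p s g * (qSVG p v B s vv g - qSV p v B s vv) ^ 2) ≤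
      ∑ a, p (s, g, a) * log (pA p s g a / pAbar p v s vv a) := by
  rcases (pSG_nonneg hp0 s g).eq_or_lt with h | h
  · have : ∀ a, p (s, g, a) = 0 := fun a =>
      (sum_eq_zero_iff_of_nonneg fun _ _ => hp0 _).1 h.symm a (mem_univ a)
    simp [← h, this]
  have hSV : 0 < pSV p v s vv := h.trans_le (le_sum_ite (pSG_nonneg hp0 s) hv)
  have hpA : ∀ a, 0 ≤ pA p s g a := fun a => div_nonneg (hp0 _) h.le
  have hpAbar : ∀ a, 0 ≤ pAbar p v s vv a := fun a =>
    div_nonneg (sum_nonneg fun _ _ => ite_nonneg (hp0 _) le_rfl) hSV.le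
  have habs : ∀ a, pAbar p v s vv a = 0 → pA p s g a = 0 := fun a ha => by
    have : pSVA p v s vv a = 0 := by simpa [pAbar, hSV.ne'] using ha
    have : p (s, g, a) = 0 := le_antisymm (this ▸ le_sum_ite (fun g => hp0 (s, g, a)) hv) (hp0 _)
    simp [pA, this]
  have hscale : ∑ a, p (s, g, a) * log (pA p s g a / pAbar p v s vv a) =
      pSG p s g * ∑ a, pA p s g a * log (pA p s g a / pAbar p v s vv a) := by
    rw [mul_sum]
    exact sum_congr rfl fun a _ => by simp only [pA]; field_simp
  rw [hscale, qSVG_eq_sum_pA p v B hv, qSV_eq_sum_pAbar, mul_left_comm]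
  exact mul_le_mul_of_nonneg_left (two_mul_sq_sum_sub_le_sum_mul_log_div hpA hpAbar (sum_pA h)
    (sum_pAbar hSV) habs _) h.le

lemma two_mul_sum_pSG_mul_sq_sub_le_CMI [Fintype 𝒱] (hp0 : ∀ ω, 0 ≤ p ω)
    (B : 𝒮 × 𝒱 → Set 𝒜) :
    2 * ∑ s, ∑ vv, ∑ g, (if v (s, g) = vv then
        pSG p s g * (qSVG p v B s vv g - qSV p v B s vv) ^ 2 else 0) ≤
      CMI p (fun ω => ω.2.2) (fun ω => ω.2.1) (fun ω => (ω.1, v (ω.1, ω.2.1))) := by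
  rw [CMI_A_G_SV_eq hp0]
  simp only [mul_sum]
  refine sum_le_sum fun s _ => sum_le_sum fun vv _ => sum_le_sum fun g _ => ?_
  split_ifs with hv
  · exact two_mul_pSG_mul_sq_sub_le hp0 B hv
  · simp

end Coarsening

theorem cmi_ge_two_mul_variance_general {𝒮 𝒢 𝒜 𝒱 : Type*}
    [Fintype 𝒮] [Fintype 𝒢] [Fintype 𝒜] [Fintype 𝒱]
    (p : 𝒮 × 𝒢 × 𝒜 → ℝ) (hp0 : ∀ ω, 0 ≤ p ω)
    (v : 𝒮 × 𝒢 → 𝒱) (B : 𝒮 × 𝒱 → Set 𝒜) :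
    CMI p (fun ω => ω.2.2) (fun ω => ω.2.1) (fun ω => (ω.1, v (ω.1, ω.2.1))) ≥
      2 * ∑ s : 𝒮, ∑ vv : 𝒱, ∑ g : 𝒢,
        (if 0 < Pr p (fun ω => (ω.1, v (ω.1, ω.2.1), ω.2.1)) (s, vv, g) then
          Pr p (fun ω => (ω.1, v (ω.1, ω.2.1), ω.2.1)) (s, vv, g) *
            (qSVG p v B s vv g - qSV p v B s vv) ^ 2
        else 0) ∧
    (0 < ∑ s : 𝒮, ∑ vv : 𝒱, ∑ g : 𝒢,
        (if 0 < Pr p (fun ω => (ω.1, v (ω.1, ω.2.1), ω.2.1)) (s, vv, g) then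
          Pr p (fun ω => (ω.1, v (ω.1, ω.2.1), ω.2.1)) (s, vv, g) *
            (qSVG p v B s vv g - qSV p v B s vv) ^ 2
        else 0) →
      0 < CMI p (fun ω => ω.2.2) (fun ω => ω.2.1) (fun ω => (ω.1, v (ω.1, ω.2.1)))) := by
  simp only [ite_pos_Pr_SVG_mul hp0]
  have h := two_mul_sum_pSG_mul_sq_sub_le_CMI (v := v) hp0 B
  exact ⟨h, fun hpos => by linarith⟩

/-- **Positive conditional action variance lower-bounds the information
gap.** With `V = v(S,G)` and a family of action sets `B : 𝒮 × 𝒱 → Set 𝒜`,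
`I(A;G|S,V) ≥ 2 ∑_{(s,v,g)} P(S=s,V=v,G=g) (q(s,v,g) − q̄(s,v))²`; in particular, if the
expected conditional variance is strictly positive then `I(A;G|S,V) > 0`. -/
theorem cmi_ge_two_mul_variance {𝒮 𝒢 𝒜 𝒱 : Type*}
    [Fintype 𝒮] [Fintype 𝒢] [Fintype 𝒜] [Fintype 𝒱]
    [Nonempty 𝒮] [Nonempty 𝒢] [Nonempty 𝒜] [Nonempty 𝒱]
    (p : 𝒮 × 𝒢 × 𝒜 → ℝ) (hp0 : ∀ ω, 0 ≤ p ω) (hp1 : ∑ ω : 𝒮 × 𝒢 × 𝒜, p ω = 1)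
    (v : 𝒮 × 𝒢 → 𝒱) (B : 𝒮 × 𝒱 → Set 𝒜) :
    CMI p (fun ω => ω.2.2) (fun ω => ω.2.1) (fun ω => (ω.1, v (ω.1, ω.2.1))) ≥
      2 * ∑ s : 𝒮, ∑ vv : 𝒱, ∑ g : 𝒢,
        (if 0 < Pr p (fun ω => (ω.1, v (ω.1, ω.2.1), ω.2.1)) (s, vv, g) then
          Pr p (fun ω => (ω.1, v (ω.1, ω.2.1), ω.2.1)) (s, vv, g) *
            (qSVG p v B s vv g - qSV p v B s vv) ^ 2
        else 0) ∧
    (0 < ∑ s : 𝒮, ∑ vv : 𝒱, ∑ g : 𝒢,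
        (if 0 < Pr p (fun ω => (ω.1, v (ω.1, ω.2.1), ω.2.1)) (s, vv, g) then
          Pr p (fun ω => (ω.1, v (ω.1, ω.2.1), ω.2.1)) (s, vv, g) *
            (qSVG p v B s vv g - qSV p v B s vv) ^ 2
        else 0) →
      0 < CMI p (fun ω => ω.2.2) (fun ω => ω.2.1) (fun ω => (ω.1, v (ω.1, ω.2.1)))) :=
  cmi_ge_two_mul_variance_general p hp0 v B
end
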